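/- Strang splitting is second-order accurate: for elements A, B of a Banach algebra, exp(δ(A+B)) = exp(δB/2)·exp(δA)·exp(δB/2) + O(δ³) as δ → 0. -/

import Mathlib

/-!
The error `f δ = exp (δ (A + B)) - exp (δ B / 2) exp (δ A) exp (δ B / 2)` is a smooth function of
the real variable `δ`. Since the `k`-th derivative of `t ↦ exp (t X)` at `0` is `X ^ k`, Leibniz'
rule shows that the Strang product has derivatives `1`, `A + B`, `(A + B) ^ 2` at `0`, exactly like
`exp (δ (A + B))`, so the derivatives of `f` of order at most two vanish at `0`. Taylor's theorem
with Lagrange remainder, applied to `f` and to `δ ↦ f (-δ)` on `[0, |δ|]`, then bounds `‖f δ‖` by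
`sup ‖f'''‖ · |δ| ^ 3 / 2`.
-/

open NormedSpace Set
open scoped Nat

section Taylor
variable {E : Type*} [NormedAddCommGroup E] [NormedSpace ℝ E]

theorem norm_le_mul_pow_div_factorial_of_iteratedDeriv_eq_zero {f : ℝ → E} {n : ℕ}
    (hf : ContDiff ℝ (n + 1) f) (hf0 : ∀ k ≤ n, iteratedDeriv k f 0 = 0) {M x : ℝ} (hx : 0 ≤ x)
    (hM : ∀ y ∈ Icc 0 x, ‖iteratedDeriv (n + 1) f y‖ ≤ M) :
    ‖f x‖ ≤ M * x ^ (n + 1) / n ! := by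
  rcases hx.eq_or_lt with rfl | hx
  · simpa using hf0 0 n.zero_le
  have hwithin : ∀ k ≤ n + 1, ∀ y ∈ Icc 0 x,
      iteratedDerivWithin k f (Icc 0 x) y = iteratedDeriv k f y := fun k hk y hy =>
    iteratedDerivWithin_eq_iteratedDeriv (uniqueDiffOn_Icc hx)
      (hf.contDiffAt.of_le (by exact_mod_cast hk)) hy
  have htaylor : taylorWithinEval f n (Icc 0 x) 0 x = 0 := by
    rw [taylor_within_apply]
    refine Finset.sum_eq_zero fun k hk => ?_
    have hkn : k ≤ n := Nat.lt_succ_iff.1 (Finset.mem_range.1 hk)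
    rw [hwithin k (by omega) 0 (left_mem_Icc.2 hx.le), hf0 k hkn, smul_zero]
  simpa [htaylor] using taylor_mean_remainder_bound hx.le hf.contDiffOn (right_mem_Icc.2 hx.le)
    fun y hy => (hwithin (n + 1) le_rfl y hy).symm ▸ hM y hy

theorem exists_norm_le_mul_abs_pow_of_iteratedDeriv_eq_zero {f : ℝ → E} {n : ℕ}
    (hf : ContDiff ℝ (n + 1) f) (hf0 : ∀ k ≤ n, iteratedDeriv k f 0 = 0) (r : ℝ) :
    ∃ C > 0, ∀ x, |x| ≤ r → ‖f x‖ ≤ C * |x| ^ (n + 1) := by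
  obtain ⟨M, hM⟩ := isCompact_Icc.exists_bound_of_continuousOn
    (hf.continuous_iteratedDeriv (n + 1) le_rfl).continuousOn (s := Icc (-r) r)
  refine ⟨max M 1, by positivity, fun x hx => ?_⟩
  refine le_trans ?_ (div_le_self (by positivity) (Nat.one_le_cast.2 n.factorial_pos))
  rcases le_total 0 x with hx0 | hx0
  · rw [abs_of_nonneg hx0] at hx ⊢
    exact norm_le_mul_pow_div_factorial_of_iteratedDeriv_eq_zero hf hf0 hx0 fun y hy =>
      (hM y ⟨by linarith [hy.1], hy.2.trans hx⟩).trans (le_max_left _ _)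
  · have hg : ContDiff ℝ (n + 1) (fun y => f (-y)) := hf.comp contDiff_neg
    have hg0 : ∀ k ≤ n, iteratedDeriv k (fun y => f (-y)) 0 = 0 := fun k hk => by
      rw [iteratedDeriv_comp_neg, neg_zero, hf0 k hk, smul_zero]
    rw [abs_of_nonpos hx0] at hx ⊢
    simpa using norm_le_mul_pow_div_factorial_of_iteratedDeriv_eq_zero hg hg0 (neg_nonneg.2 hx0)
      fun y hy => by
        rw [iteratedDeriv_comp_neg, norm_smul, norm_pow, norm_neg, norm_one, one_pow, one_mul]
        exact (hM (-y) ⟨by linarith [hy.2], by linarith [hy.1]⟩).trans (le_max_left _ _)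

end Taylor

section ExpSmul
variable {𝔸 : Type*} [NormedRing 𝔸] [NormedAlgebra ℝ 𝔸] [CompleteSpace 𝔸]

theorem contDiff_exp_smul (X : 𝔸) {n : WithTop ℕ∞} : ContDiff ℝ n fun t : ℝ => exp (t • X) :=
  contDiff_iff_contDiffAt.2 fun t =>
    (exp_analytic (t • X)).contDiffAt.comp t (contDiff_id.smul contDiff_const).contDiffAt

theorem iteratedDeriv_exp_smul (X : 𝔸) (n : ℕ) :
    iteratedDeriv n (fun t : ℝ => exp (t • X)) = fun t => X ^ n * exp (t • X) := by
  induction n with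
  | zero => simp
  | succ n ih =>
    rw [iteratedDeriv_succ, ih]
    funext t
    rw [((hasDerivAt_exp_smul_const' X t).const_mul (X ^ n)).deriv, pow_succ, mul_assoc]

theorem iteratedDeriv_exp_smul_zero (X : 𝔸) (n : ℕ) :
    iteratedDeriv n (fun t : ℝ => exp (t • X)) 0 = X ^ n := by
  simp [iteratedDeriv_exp_smul]

theorem iteratedDeriv_mul_exp_smul_zero {f : ℝ → 𝔸} {n : ℕ} (hf : ContDiff ℝ n f) (Y : 𝔸) :
    iteratedDeriv n (fun t => f t * exp (t • Y)) 0 =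
      ∑ i ∈ Finset.range (n + 1), n.choose i * iteratedDeriv i f 0 * Y ^ (n - i) := by
  simp only [iteratedDeriv_fun_mul hf.contDiffAt (contDiff_exp_smul Y).contDiffAt,
    iteratedDeriv_exp_smul_zero]

theorem iteratedDeriv_strang_error_eq_zero (A B : 𝔸) :
    ∀ k ≤ 2, iteratedDeriv k (fun t : ℝ => exp (t • (A + B)) -
      exp (t • (2⁻¹ : ℝ) • B) * exp (t • A) * exp (t • (2⁻¹ : ℝ) • B)) 0 = 0 := by
  intro k hk
  rw [iteratedDeriv_fun_sub (contDiff_exp_smul _).contDiffAt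
    (((contDiff_exp_smul _).mul (contDiff_exp_smul _)).mul (contDiff_exp_smul _)).contDiffAt,
    iteratedDeriv_mul_exp_smul_zero ((contDiff_exp_smul _).mul (contDiff_exp_smul _)),
    iteratedDeriv_exp_smul_zero, sub_eq_zero]
  interval_cases k <;>
    simp only [Finset.sum_range_succ, Finset.sum_range_zero, Nat.choose_self, Nat.choose_zero_right,
      Nat.choose_succ_self_right, iteratedDeriv_mul_exp_smul_zero (contDiff_exp_smul _),
      iteratedDeriv_exp_smul_zero, Nat.reduceAdd, Nat.reduceSub, Nat.cast_one, Nat.cast_ofNat,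
      pow_zero, pow_one, sq, one_mul, mul_one, two_mul, add_mul, mul_add, smul_mul_assoc,
      mul_smul_comm, zero_mul, zero_add] <;>
    module

end ExpSmul

open NormedSpace in
/-- Strang splitting is second-order accurate: in a complex Banach algebra,
`exp(δ(A+B)) = exp(δB/2)·exp(δA)·exp(δB/2) + O(δ³)`; explicitly there is
`C > 0` with the error bounded by `C|δ|³` for all `|δ| ≤ 1`. -/
theorem strang_splitting_second_order (𝔸 : Type*) [NormedRing 𝔸]
    [NormedAlgebra ℂ 𝔸] [CompleteSpace 𝔸] (A B : 𝔸) :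
    ∃ C > 0, ∀ δ : ℝ, |δ| ≤ 1 →
      ‖exp (δ • (A + B)) -
        exp ((δ / 2) • B) * exp (δ • A) * exp ((δ / 2) • B)‖ ≤
        C * |δ| ^ 3 := by
  obtain ⟨C, hC, hbound⟩ := exists_norm_le_mul_abs_pow_of_iteratedDeriv_eq_zero (n := 2)
    ((contDiff_exp_smul _).sub
      (((contDiff_exp_smul _).mul (contDiff_exp_smul _)).mul (contDiff_exp_smul _)))
    (iteratedDeriv_strang_error_eq_zero A B) 1
  refine ⟨C, hC, fun δ hδ => ?_⟩
  have hhalf : (δ / 2) • B = δ • (2⁻¹ : ℝ) • B := by rw [smul_smul, div_eq_mul_inv]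
  simpa only [hhalf] using hbound δ hδ
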